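/- Let $\Gamma$ be an odd minimal edge cutset in $\mathbb{Z}^d$, $\delta \in \{0,1\}$, and let $v \in E_\delta(\Gamma)$ (a vertex of $A_\delta$ incident to an edge of $\Gamma$). Define $U_1(v)$ as the set of vertices $v' \in E_\delta(\Gamma)$ such that there is $u \in A_\delta$ adjacent to both $v$ and $v'$. Then $|U_1(v)| \geq P_\Gamma(v)\,(2d - P_\Gamma(v)) - \min\{P_\Gamma(v), 2d - P_\Gamma(v)\}$. -/

import Mathlib

/-!
Write the neighbours of `v` as `v + e` for the `2d` unit vectors `e`: `P` of them lie outside `S`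
and `2d - P` inside. For an outer step `q` and an inner step `p ≠ -q`, the vertex `v + q + p` lies
in `U₁(v)`: it is adjacent to `v + q ∉ S`, and it lies in `S` because its neighbour `v + p ∈ S`
is not a boundary vertex (on a side of an odd cutset all boundary vertices have the same parity,
while `v + p` and `v` have opposite parities). Distinct pairs give distinct vertices, since `q + p`
determines `{q, p}` and only `q` points out of `S`. At most `min P (2d - P)` pairs have `p = -q`.
-/

/-- Nearest-neighbor adjacency in `ℤ^d`. -/
def latAdj (d : ℕ) (v w : Fin d → ℤ) : Prop := ∑ i, |v i - w i| = 1

open Finset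

theorem Finset.card_mul_sub_min_le_card_filter_ne {α β : Type*} [DecidableEq β] (s : Finset α)
    (t : Finset β) {f : α → β} (hf : f.Injective) :
    #s * #t - min #s #t ≤ #((s ×ˢ t).filter fun x => x.2 ≠ f x.1) := by
  have hsplit := card_filter_add_card_filter_not (s := s ×ˢ t) (p := fun x => x.2 = f x.1)
  have hs : #((s ×ˢ t).filter fun x => x.2 = f x.1) ≤ #s := by
    refine card_le_card_of_injOn Prod.fst (fun x hx => (mem_product.1 (mem_filter.1 hx).1).1) ?_
    intro x hx y hy hxy
    exact Prod.ext hxy ((mem_filter.1 hx).2.trans (hxy ▸ (mem_filter.1 hy).2.symm))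
  have ht : #((s ×ˢ t).filter fun x => x.2 = f x.1) ≤ #t := by
    refine card_le_card_of_injOn Prod.snd (fun x hx => (mem_product.1 (mem_filter.1 hx).1).2) ?_
    intro x hx y hy hxy
    exact Prod.ext (hf ((mem_filter.1 hx).2.symm.trans (hxy ▸ (mem_filter.1 hy).2))) hxy
  rw [card_product] at hsplit
  simp only [ne_eq]
  omega

section Lattice

variable {d : ℕ}

def unitVec (p : Fin d × ℤˣ) : Fin d → ℤ := Pi.single p.1 (p.2 : ℤ)

def oppDir (p : Fin d × ℤˣ) : Fin d × ℤˣ := (p.1, -p.2)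

theorem oppDir_injective : Function.Injective (oppDir (d := d)) := by
  rintro ⟨i, s⟩ ⟨j, t⟩ h
  simpa [oppDir] using h

theorem unitVec_apply_fst_eq_iff {p r : Fin d × ℤˣ} : unitVec r p.1 = p.2 ↔ r = p := by
  refine ⟨fun h => ?_, fun h => by simp [h, unitVec]⟩
  rcases eq_or_ne r.1 p.1 with h1 | h1
  · simp only [unitVec, ← h1, Pi.single_eq_same, Units.val_inj] at h
    exact Prod.ext h1 h
  · rw [unitVec, Pi.single_eq_of_ne (Ne.symm h1)] at h
    exact absurd h.symm p.2.ne_zero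

theorem unitVec_injective : Function.Injective (unitVec (d := d)) :=
  fun _ _ h => unitVec_apply_fst_eq_iff.1 (h ▸ unitVec_apply_fst_eq_iff.2 rfl)

theorem unitVec_apply_eq_zero_or (r : Fin d × ℤˣ) (i : Fin d) :
    unitVec r i = 0 ∨ unitVec r i = 1 ∨ unitVec r i = -1 := by
  unfold unitVec
  rcases eq_or_ne i r.1 with rfl | hi
  · rcases Int.units_eq_one_or r.2 with h | h <;> simp [h]
  · simp [hi]

/-- Unless `q = -p`, the `p.1`-coordinate of the sum has the sign of `p`, so one of `p'`, `q'`
must be `p`. -/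
theorem unitVec_add_unitVec_eq {p q p' q' : Fin d × ℤˣ} (hpq : q ≠ oppDir p)
    (h : unitVec p + unitVec q = unitVec p' + unitVec q') : p = p' ∨ p = q' := by
  by_contra! hne
  have hval := congrFun h p.1
  have hp : unitVec p p.1 = p.2 := unitVec_apply_fst_eq_iff.2 rfl
  have hq : unitVec q p.1 ≠ -p.2 := fun h' =>
    hpq ((unitVec_apply_fst_eq_iff (p := oppDir p)).1 (by simpa [oppDir] using h'))
  have hp' : unitVec p' p.1 ≠ p.2 := fun h' => hne.1 (unitVec_apply_fst_eq_iff.1 h').symm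
  have hq' : unitVec q' p.1 ≠ p.2 := fun h' => hne.2 (unitVec_apply_fst_eq_iff.1 h').symm
  simp only [Pi.add_apply] at hval
  have := unitVec_apply_eq_zero_or q p.1
  have := unitVec_apply_eq_zero_or p' p.1
  have := unitVec_apply_eq_zero_or q' p.1
  have := Int.isUnit_iff.1 p.2.isUnit
  omega

theorem latAdj_symm {v w : Fin d → ℤ} (h : latAdj d v w) : latAdj d w v := by
  simpa only [latAdj, abs_sub_comm] using h

theorem latAdj_add_unitVec (v : Fin d → ℤ) (p : Fin d × ℤˣ) : latAdj d v (v + unitVec p) := by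
  simp only [latAdj, Pi.add_apply, sub_add_cancel_left, abs_neg]
  rw [sum_eq_single p.1 (fun i _ hi => by simp [unitVec, hi]) (by simp)]
  simpa [unitVec] using Int.isUnit_iff_abs_eq.1 p.2.isUnit

theorem latAdj_iff {v w : Fin d → ℤ} : latAdj d v w ↔ ∃ p, w = v + unitVec p := by
  refine ⟨fun h => ?_, fun ⟨p, hp⟩ => hp ▸ latAdj_add_unitVec v p⟩
  obtain ⟨k, -, hk⟩ := exists_ne_zero_of_sum_ne_zero (h.trans_ne one_ne_zero)
  have hk1 : |v k - w k| = 1 :=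
    le_antisymm (h ▸ single_le_sum (f := fun i => |v i - w i|) (fun i _ => abs_nonneg _)
      (mem_univ k)) (Int.one_le_abs (abs_ne_zero.1 hk))
  have hrest : ∀ i ≠ k, v i = w i := by
    have : ∑ i ∈ univ.erase k, |v i - w i| = 0 := by
      rw [latAdj, ← add_sum_erase _ _ (mem_univ k)] at h; linarith
    intro i hi
    have := (sum_eq_zero_iff_of_nonneg fun _ _ => abs_nonneg _).1 this i (by simp [hi])
    exact sub_eq_zero.1 (abs_eq_zero.1 this)
  have hunit : IsUnit (w k - v k) := Int.isUnit_iff_abs_eq.2 (abs_sub_comm (w k) _ ▸ hk1)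
  refine ⟨(k, hunit.unit), funext fun i => ?_⟩
  rcases eq_or_ne i k with rfl | hi
  · simp [unitVec]
  · simp [unitVec, hi, hrest i hi]

theorem latAdj.odd_sum_iff {v w : Fin d → ℤ} (h : latAdj d v w) :
    Odd (∑ i, w i) ↔ ¬Odd (∑ i, v i) := by
  obtain ⟨p, rfl⟩ := latAdj_iff.1 h
  have hs : ¬Even (p.2 : ℤ) := by rcases Int.units_eq_one_or p.2 with h | h <;> simp [h]
  simp [unitVec, sum_add_distrib, Int.odd_add, hs, Int.not_odd_iff_even]

theorem finite_setOf_latAdj_latAdj (v : Fin d → ℤ) :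
    {x | ∃ u, latAdj d v u ∧ latAdj d x u}.Finite := by
  refine (Set.finite_range fun pq : (Fin d × ℤˣ) × (Fin d × ℤˣ) =>
    v + unitVec pq.1 + unitVec pq.2).subset ?_
  rintro x ⟨u, hvu, hxu⟩
  obtain ⟨p, rfl⟩ := latAdj_iff.1 hvu
  obtain ⟨q, rfl⟩ := latAdj_iff.1 (latAdj_symm hxu)
  exact ⟨(p, q), rfl⟩

theorem ncard_setOf_latAdj_notMem (S : Set (Fin d → ℤ)) [DecidablePred (· ∈ S)]
    (v : Fin d → ℤ) :
    {w | latAdj d v w ∧ w ∉ S}.ncard = #(univ.filter fun p => v + unitVec p ∉ S) := by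
  rw [← card_image_of_injective _ (add_right_injective v |>.comp unitVec_injective),
    ← Set.ncard_coe_finset]
  congr 1
  ext w
  simp only [latAdj_iff, coe_image, coe_filter, mem_univ, true_and,
    Set.mem_image, Function.comp_apply]
  constructor
  · rintro ⟨⟨p, rfl⟩, hw⟩; exact ⟨p, hw, rfl⟩
  · rintro ⟨p, hp, rfl⟩; exact ⟨⟨p, rfl⟩, hp⟩

theorem injOn_add_unitVec_add_unitVec (S : Set (Fin d → ℤ)) (v : Fin d → ℤ) :
    Set.InjOn (fun qp : (Fin d × ℤˣ) × (Fin d × ℤˣ) => v + unitVec qp.1 + unitVec qp.2)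
      {qp | v + unitVec qp.1 ∉ S ∧ v + unitVec qp.2 ∈ S ∧ qp.2 ≠ oppDir qp.1} := by
  rintro ⟨q, p⟩ ⟨hq, -, hqp⟩ ⟨q', p'⟩ ⟨-, hp', -⟩ h
  have h' : unitVec q + unitVec p = unitVec q' + unitVec p' := by
    simpa only [add_assoc, add_right_inj] using h
  rcases unitVec_add_unitVec_eq hqp h' with rfl | rfl
  · rw [unitVec_injective (add_left_cancel h')]
  · exact absurd hp' hq

end Lattice

/-- For `S = A_δ`, `IsBoundary S` is `E_δ(Γ)` and `U1 S v` is `U₁(v)`. -/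
def IsBoundary {d : ℕ} (S : Set (Fin d → ℤ)) (v : Fin d → ℤ) : Prop :=
  v ∈ S ∧ ∃ w, latAdj d v w ∧ w ∉ S

def U1 {d : ℕ} (S : Set (Fin d → ℤ)) (v : Fin d → ℤ) : Set (Fin d → ℤ) :=
  {v' | v' ∈ S ∧ (∃ w, latAdj d v' w ∧ w ∉ S) ∧ ∃ u ∈ S, latAdj d v u ∧ latAdj d v' u}

def HasOddBoundary {d : ℕ} (A : Set (Fin d → ℤ)) : Prop :=
  ∀ v ∈ A, (∃ w, latAdj d v w ∧ w ∉ A) → Odd (∑ i, v i)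

section OddCutset

variable {d : ℕ} {A₁ S : Set (Fin d → ℤ)} {v : Fin d → ℤ}

theorem IsBoundary.odd_sum_iff
    (hodd : HasOddBoundary A₁) (hS : S = A₁ ∨ S = A₁ᶜ) (hv : IsBoundary S v) :
    Odd (∑ i, v i) ↔ S = A₁ := by
  obtain ⟨hvS, w, hvw, hwS⟩ := hv
  rcases hS with rfl | rfl
  · exact iff_of_true (hodd v hvS ⟨w, hvw, hwS⟩) rfl
  · have hw : Odd (∑ i, w i) := hodd w (not_not.1 hwS) ⟨v, latAdj_symm hvw, hvS⟩
    exact iff_of_false (hvw.odd_sum_iff.1 hw) compl_ne_self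

theorem IsBoundary.mem_of_latAdj_of_latAdj
    (hodd : HasOddBoundary A₁) (hS : S = A₁ ∨ S = A₁ᶜ) (hv : IsBoundary S v) {x u : Fin d → ℤ}
    (hx : x ∈ S) (hvx : latAdj d v x) (hxu : latAdj d x u) : u ∈ S := by
  by_contra hu
  have hsame := (hv.odd_sum_iff hodd hS).trans
    (IsBoundary.odd_sum_iff hodd hS ⟨hx, u, hxu, hu⟩).symm
  exact iff_not_self (hsame.trans hvx.odd_sum_iff)

theorem IsBoundary.add_unitVec_add_unitVec_mem_U1
    (hodd : HasOddBoundary A₁) (hS : S = A₁ ∨ S = A₁ᶜ) (hv : IsBoundary S v) {q p : Fin d × ℤˣ}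
    (hq : v + unitVec q ∉ S) (hp : v + unitVec p ∈ S) :
    v + unitVec q + unitVec p ∈ U1 S v := by
  have hadj : latAdj d (v + unitVec q + unitVec p) (v + unitVec p) := by
    rw [add_right_comm]; exact latAdj_symm (latAdj_add_unitVec _ q)
  exact ⟨hv.mem_of_latAdj_of_latAdj hodd hS hp (latAdj_add_unitVec v p) (latAdj_symm hadj),
    ⟨v + unitVec q, latAdj_symm (latAdj_add_unitVec _ p), hq⟩,
    v + unitVec p, hp, latAdj_add_unitVec v p, hadj⟩

end OddCutset

theorem U1_size_lower_bound_general (d : ℕ) (A₁ : Set (Fin d → ℤ))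
    (hodd : ∀ v ∈ A₁, (∃ w, latAdj d v w ∧ w ∉ A₁) → Odd (∑ i, v i))
    (S : Set (Fin d → ℤ)) (hS : S = A₁ ∨ S = A₁ᶜ)
    (v : Fin d → ℤ) (hv : v ∈ S)
    (hP : 0 < {w | latAdj d v w ∧ w ∉ S}.ncard) :
    {w | latAdj d v w ∧ w ∉ S}.ncard * (2 * d - {w | latAdj d v w ∧ w ∉ S}.ncard)
        - min {w | latAdj d v w ∧ w ∉ S}.ncard
            (2 * d - {w | latAdj d v w ∧ w ∉ S}.ncard)
      ≤ {v' | v' ∈ S ∧ (∃ w, latAdj d v' w ∧ w ∉ S) ∧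
          ∃ u ∈ S, latAdj d v u ∧ latAdj d v' u}.ncard := by
  classical
  have hvb : IsBoundary S v := ⟨hv, Set.nonempty_of_ncard_ne_zero hP.ne'⟩
  set Out := univ.filter fun p => v + unitVec p ∉ S
  set In := univ.filter fun p => v + unitVec p ∈ S
  have hIn : 2 * d - #Out = #In := by
    have : #In + #Out = 2 * d := by
      rw [card_filter_add_card_filter_not, card_univ, Fintype.card_prod, Fintype.card_fin,
        Fintype.card_units_int, mul_comm]
    omega
  have hOut : {w | latAdj d v w ∧ w ∉ S}.ncard = #Out := ncard_setOf_latAdj_notMem S v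
  rw [hOut, hIn]
  set T := (Out ×ˢ In).filter fun qp => qp.2 ≠ oppDir qp.1
  have hT : ∀ qp ∈ T, v + unitVec qp.1 ∉ S ∧ v + unitVec qp.2 ∈ S ∧ qp.2 ≠ oppDir qp.1 := by
    intro qp hqp
    simpa only [T, Out, In, coe_filter, mem_product, mem_filter, mem_univ, true_and, and_assoc]
      using hqp
  calc #Out * #In - min #Out #In ≤ #T := card_mul_sub_min_le_card_filter_ne Out In oppDir_injective
    _ = (T : Set _).ncard := (Set.ncard_coe_finset T).symm
    _ ≤ (U1 S v).ncard :=
      Set.ncard_le_ncard_of_injOn _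
        (fun qp hqp => hvb.add_unitVec_add_unitVec_mem_U1 hodd hS (hT qp hqp).1 (hT qp hqp).2.1)
        ((injOn_add_unitVec_add_unitVec S v).mono fun qp hqp => hT qp hqp)
        ((finite_setOf_latAdj_latAdj v).subset fun _ ⟨_, _, u, _, hvu, hxu⟩ => ⟨u, hvu, hxu⟩)

/-- for an odd cutset with sides `A₁`, `A₀ = A₁ᶜ`, and a vertex
`v ∈ E_δ` (i.e. `v ∈ A_δ` incident to a crossing edge, `P_Γ(v) > 0`), the set
`U₁(v)` of vertices `v' ∈ E_δ` having a common neighbor with `v` inside `A_δ`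
satisfies `|U₁(v)| ≥ P_Γ(v)(2d - P_Γ(v)) - min{P_Γ(v), 2d - P_Γ(v)}`. -/
theorem U1_size_lower_bound (d : ℕ) (hd : 1 ≤ d) (A₁ : Set (Fin d → ℤ))
    (hodd : ∀ v ∈ A₁, (∃ w, latAdj d v w ∧ w ∉ A₁) → Odd (∑ i, v i))
    (S : Set (Fin d → ℤ)) (hS : S = A₁ ∨ S = A₁ᶜ)
    (v : Fin d → ℤ) (hv : v ∈ S)
    (hP : 0 < {w | latAdj d v w ∧ w ∉ S}.ncard) :
    {w | latAdj d v w ∧ w ∉ S}.ncard * (2 * d - {w | latAdj d v w ∧ w ∉ S}.ncard)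
        - min {w | latAdj d v w ∧ w ∉ S}.ncard
            (2 * d - {w | latAdj d v w ∧ w ∉ S}.ncard)
      ≤ {v' | v' ∈ S ∧ (∃ w, latAdj d v' w ∧ w ∉ S) ∧
          ∃ u ∈ S, latAdj d v u ∧ latAdj d v' u}.ncard :=
  U1_size_lower_bound_general d A₁ hodd S hS v hv hP
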